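/- arXiv:1511.01763 — 4 statements merged into one kernel-verified Lean document; each statement's English description precedes it below -/
import Mathlib

section
/- Let (Y_{n2})_{n≥0} be a sequence of real random variables with Y_{02} = 0, and let α ∈ (0,∞). Assume E|Y_{n2} − Y_{n−1,2}|^α < ∞ for all n ≥ 1 and limsup_{n→∞} n^{−1} log E|Y_{n2} − Y_{n−1,2}|^α < 0. Then E[(sup_n Y_{n2})_+^α] < ∞ and E[|inf_n Y_{n2}|^α] < ∞, where the sup and inf are over n ∈ ℕ (interpreting both as the sup/inf of the partial sequence, which are finite a.s.). -/
/-!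
Write `D k = |Y (k+1) - Y k|`. Since `Y 0 = 0`, every `|Y n|`, hence `|sup Y|` and `|inf Y|`, is
bounded by `S = ∑ D k`, so it suffices to show `E S^α < ∞`. The hypothesis gives `E D k ^ α ≤ r^k`
eventually, for some `r < 1`. Choosing `r < ρ < 1` and weights `w k` with `w k ^ α = ρ^k`, the
bound `S^α ≤ (∑ w k)^α ∑ D k^α / ρ^k` holds for every `α > 0` (no case split into `α ≤ 1` and
Minkowski for `α ≥ 1`), and taking expectations yields two convergent geometric series.
-/

open MeasureTheory Filter
open scoped ENNReal

theorem ENNReal.rpow_tsum_le_mul_tsum_rpow_div {ι : Type*} {p : ℝ} (hp : 0 < p)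
    (a w : ι → ℝ≥0∞) (hw0 : ∀ i, w i ≠ 0) (hwt : ∀ i, w i ≠ ⊤) :
    (∑' i, a i) ^ p ≤ (∑' i, w i) ^ p * ∑' i, a i ^ p / w i ^ p := by
  set T := ∑' i, a i ^ p / w i ^ p
  have hratio : ∀ i, a i / w i ≤ T ^ p⁻¹ := fun i => by
    rw [ENNReal.le_rpow_inv_iff hp, ENNReal.div_rpow_of_nonneg _ _ hp.le]
    exact ENNReal.le_tsum i
  have hsum : ∑' i, a i ≤ T ^ p⁻¹ * ∑' i, w i := by
    rw [← ENNReal.tsum_mul_left]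
    exact ENNReal.tsum_le_tsum fun i => (ENNReal.div_le_iff (hw0 i) (hwt i)).1 (hratio i)
  calc (∑' i, a i) ^ p ≤ (T ^ p⁻¹ * ∑' i, w i) ^ p := ENNReal.rpow_le_rpow hsum hp.le
    _ = (∑' i, w i) ^ p * T := by
      rw [ENNReal.mul_rpow_of_nonneg _ _ hp.le, ENNReal.rpow_inv_rpow hp.ne', mul_comm]

theorem ENNReal.tsum_ne_top_of_eventually_le {t g : ℕ → ℝ≥0∞} (ht : ∀ k, t k ≠ ⊤)
    (hg : ∑' k, g k ≠ ⊤) (htg : ∀ᶠ k in atTop, t k ≤ g k) : ∑' k, t k ≠ ⊤ := by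
  obtain ⟨N, hN⟩ := eventually_atTop.1 htg
  rw [(ENNReal.summable.hasSum (f := fun n => t (n + N))).sum_range_add.tsum_eq]
  refine ENNReal.add_ne_top.2 ⟨ENNReal.sum_ne_top.2 fun k _ => ht k, ne_top_of_le_ne_top hg ?_⟩
  calc ∑' n, t (n + N) ≤ ∑' n, g (n + N) :=
        ENNReal.tsum_le_tsum fun n => hN _ (Nat.le_add_left N n)
    _ ≤ ∑' k, g k := ENNReal.tsum_comp_le_tsum_of_injective (add_left_injective N) g

theorem lintegral_rpow_tsum_lt_top {Ω : Type*} [MeasurableSpace Ω] {μ : Measure Ω}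
    {f : ℕ → Ω → ℝ≥0∞} {p : ℝ} (hp : 0 < p) (hf : ∀ k, AEMeasurable (fun ω => f k ω ^ p) μ)
    (hfin : ∀ k, ∫⁻ ω, f k ω ^ p ∂μ ≠ ⊤) {r : ℝ≥0∞} (hr : r < 1)
    (hdecay : ∀ᶠ k in atTop, ∫⁻ ω, f k ω ^ p ∂μ ≤ r ^ k) :
    ∫⁻ ω, (∑' k, f k ω) ^ p ∂μ < ⊤ := by
  obtain ⟨ρ, hrρ, hρ1⟩ := exists_between hr
  have hρ0 : ρ ≠ 0 := (hrρ.trans_le' bot_le).ne'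
  have hρt : ρ ≠ ⊤ := hρ1.ne_top
  set w : ℕ → ℝ≥0∞ := fun k => (ρ ^ p⁻¹) ^ k
  have hw : ∀ k, w k ^ p = ρ ^ k := fun k => by
    rw [← ENNReal.rpow_natCast_mul, mul_comm, ENNReal.rpow_mul_natCast,
      ENNReal.rpow_inv_rpow hp.ne']
  have hw0 : ∀ k, w k ≠ 0 := fun k =>
    pow_ne_zero _ (ENNReal.rpow_pos (pos_iff_ne_zero.2 hρ0) hρt).ne'
  have hwt : ∀ k, w k ≠ ⊤ := fun k =>
    ENNReal.pow_ne_top (ENNReal.rpow_ne_top_of_nonneg (inv_nonneg.2 hp.le) hρt)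
  have hW : ∑' k, w k ≠ ⊤ :=
    (tsum_geometric_lt_top.2 (ENNReal.rpow_lt_one hρ1 (inv_pos.2 hp))).ne
  have hratio : r / ρ < 1 := by rwa [ENNReal.div_lt_iff (.inl hρ0) (.inl hρt), one_mul]
  have hsum : ∑' k, (∫⁻ ω, f k ω ^ p ∂μ) / ρ ^ k ≠ ⊤ := by
    refine ENNReal.tsum_ne_top_of_eventually_le
      (fun k => ENNReal.div_ne_top (hfin k) (pow_ne_zero _ hρ0))
      (tsum_geometric_lt_top.2 hratio).ne ?_
    filter_upwards [hdecay] with k hk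
    rwa [ENNReal.div_le_iff (pow_ne_zero _ hρ0) (ENNReal.pow_ne_top hρt), ← mul_pow,
      ENNReal.div_mul_cancel hρ0 hρt]
  calc ∫⁻ ω, (∑' k, f k ω) ^ p ∂μ
      ≤ ∫⁻ ω, (∑' k, w k) ^ p * ∑' k, f k ω ^ p / w k ^ p ∂μ :=
        lintegral_mono fun ω => ENNReal.rpow_tsum_le_mul_tsum_rpow_div hp _ w hw0 hwt
    _ = (∑' k, w k) ^ p * ∑' k, (∫⁻ ω, f k ω ^ p ∂μ) / ρ ^ k := by
        simp_rw [hw, div_eq_mul_inv]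
        rw [lintegral_const_mul' _ _ (ENNReal.rpow_ne_top_of_nonneg hp.le hW),
          lintegral_tsum fun k => (hf k).mul_const _]
        simp_rw [lintegral_mul_const'' _ (hf _)]
    _ < ⊤ := ENNReal.mul_lt_top (ENNReal.rpow_lt_top_of_nonneg hp.le hW).lt_top hsum.lt_top

theorem ofReal_abs_le_tsum_ofReal_abs_sub {Y : ℕ → ℝ} (hY0 : Y 0 = 0) (n : ℕ) :
    ENNReal.ofReal |Y n| ≤ ∑' k, ENNReal.ofReal |Y (k + 1) - Y k| :=
  calc ENNReal.ofReal |Y n| = ENNReal.ofReal |∑ k ∈ Finset.range n, (Y (k + 1) - Y k)| := by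
        rw [Finset.sum_range_sub, hY0, sub_zero]
    _ ≤ ENNReal.ofReal (∑ k ∈ Finset.range n, |Y (k + 1) - Y k|) :=
        ENNReal.ofReal_le_ofReal (Finset.abs_sum_le_sum_abs _ _)
    _ = ∑ k ∈ Finset.range n, ENNReal.ofReal |Y (k + 1) - Y k| :=
        ENNReal.ofReal_sum_of_nonneg fun k _ => abs_nonneg _
    _ ≤ ∑' k, ENNReal.ofReal |Y (k + 1) - Y k| := ENNReal.sum_le_tsum _

theorem ofReal_abs_iSup_le_of_forall {ι : Type*} [Nonempty ι] {f : ι → ℝ} {S : ℝ≥0∞}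
    (hf : ∀ i, ENNReal.ofReal |f i| ≤ S) : ENNReal.ofReal |⨆ i, f i| ≤ S := by
  rcases eq_or_ne S ⊤ with rfl | hS
  · exact le_top
  simp only [ENNReal.ofReal_le_iff_le_toReal hS, abs_le] at hf ⊢
  obtain ⟨i⟩ := ‹Nonempty ι›
  exact ⟨(hf i).1.trans (le_ciSup ⟨_, Set.forall_mem_range.2 fun j => (hf j).2⟩ i),
    ciSup_le fun j => (hf j).2⟩

theorem ofReal_abs_iInf_le_of_forall {ι : Type*} [Nonempty ι] {f : ι → ℝ} {S : ℝ≥0∞}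
    (hf : ∀ i, ENNReal.ofReal |f i| ≤ S) : ENNReal.ofReal |⨅ i, f i| ≤ S := by
  rcases eq_or_ne S ⊤ with rfl | hS
  · exact le_top
  simp only [ENNReal.ofReal_le_iff_le_toReal hS, abs_le] at hf ⊢
  obtain ⟨i⟩ := ‹Nonempty ι›
  exact ⟨le_ciInf fun j => (hf j).1,
    (ciInf_le ⟨_, Set.forall_mem_range.2 fun j => (hf j).1⟩ i).trans (hf i).2⟩

theorem exists_eventually_le_pow_of_limsup_log_div_neg {c : ℕ → ℝ}
    (h : limsup (fun n : ℕ => Real.log (c n) / (n + 1 : ℝ)) atTop < 0) :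
    ∃ r, 0 ≤ r ∧ r < 1 ∧ ∀ᶠ n in atTop, c n ≤ r ^ n := by
  have hbdd : IsBoundedUnder (· ≤ ·) atTop fun n : ℕ => Real.log (c n) / (n + 1 : ℝ) := by
    by_contra hnot
    exact h.ne (Real.limsup_of_not_isBoundedUnder hnot)
  obtain ⟨b, hlb, hb⟩ := exists_between h
  refine ⟨Real.exp b, (Real.exp_pos b).le, Real.exp_lt_one_iff.2 hb, ?_⟩
  filter_upwards [eventually_lt_of_limsup_lt hlb hbdd] with n hn
  rw [div_lt_iff₀ (by positivity)] at hn
  calc c n ≤ Real.exp (Real.log (c n)) := Real.le_exp_log _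
    _ ≤ Real.exp (n * b) := Real.exp_le_exp.2 (by nlinarith)
    _ = Real.exp b ^ n := Real.exp_nat_mul b n

theorem moment_sup_inf_finite_general
    {Ω : Type*} [MeasurableSpace Ω] (P : Measure Ω)
    (Y : ℕ → Ω → ℝ) (hY0 : Y 0 = 0) (α : ℝ) (hα : 0 < α)
    (hint : ∀ n : ℕ, Integrable (fun ω => |Y (n + 1) ω - Y n ω| ^ α) P)
    (hdecay :
      limsup (fun n : ℕ =>
        Real.log (∫ ω, |Y (n + 1) ω - Y n ω| ^ α ∂P) / (n + 1 : ℝ)) atTop < 0) :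
    (∫⁻ ω, ENNReal.ofReal (|(⨆ n : ℕ, Y n ω)| ^ α) ∂P) < ⊤ ∧
    (∫⁻ ω, ENNReal.ofReal (|(⨅ n : ℕ, Y n ω)| ^ α) ∂P) < ⊤ := by
  set S : Ω → ℝ≥0∞ := fun ω => ∑' k, ENNReal.ofReal |Y (k + 1) ω - Y k ω|
  have hpow : ∀ k ω, ENNReal.ofReal |Y (k + 1) ω - Y k ω| ^ α =
      ENNReal.ofReal (|Y (k + 1) ω - Y k ω| ^ α) := fun k ω =>
    ENNReal.ofReal_rpow_of_nonneg (abs_nonneg _) hα.le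
  have hmoment : ∀ k, ∫⁻ ω, ENNReal.ofReal |Y (k + 1) ω - Y k ω| ^ α ∂P =
      ENNReal.ofReal (∫ ω, |Y (k + 1) ω - Y k ω| ^ α ∂P) := fun k => by
    simp_rw [hpow]
    exact (ofReal_integral_eq_lintegral_ofReal (hint k) (ae_of_all _ fun ω => by positivity)).symm
  obtain ⟨r, hr0, hr1, hgeom⟩ := exists_eventually_le_pow_of_limsup_log_div_neg hdecay
  have hS : ∫⁻ ω, S ω ^ α ∂P < ⊤ :=
    lintegral_rpow_tsum_lt_top hα
      (fun k => by simpa only [hpow] using (hint k).aemeasurable.ennreal_ofReal)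
      (fun k => hmoment k ▸ ENNReal.ofReal_ne_top) (ENNReal.ofReal_lt_one.2 hr1)
      (hgeom.mono fun k hk => by
        rw [hmoment, ← ENNReal.ofReal_pow hr0]
        exact ENNReal.ofReal_le_ofReal hk)
  have hY : ∀ ω n, ENNReal.ofReal |Y n ω| ≤ S ω := fun ω =>
    ofReal_abs_le_tsum_ofReal_abs_sub (congrFun hY0 ω)
  have hle : ∀ x ω, ENNReal.ofReal |x| ≤ S ω → ENNReal.ofReal (|x| ^ α) ≤ S ω ^ α :=
    fun x ω hx => by
      rw [← ENNReal.ofReal_rpow_of_nonneg (abs_nonneg _) hα.le]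
      exact ENNReal.rpow_le_rpow hx hα.le
  exact ⟨(lintegral_mono fun ω => hle _ ω (ofReal_abs_iSup_le_of_forall (hY ω))).trans_lt hS,
    (lintegral_mono fun ω => hle _ ω (ofReal_abs_iInf_le_of_forall (hY ω))).trans_lt hS⟩

/-- Lemma 6.5: if the increments of a process `Y` (with `Y 0 = 0`) have α-th
moments decaying exponentially, then the α-th moments of the supremum and of
(the absolute value of) the infimum of the process are finite. -/
theorem moment_sup_inf_finite
    {Ω : Type*} [MeasurableSpace Ω] (P : Measure Ω) [IsProbabilityMeasure P]
    (Y : ℕ → Ω → ℝ) (hY0 : Y 0 = 0) (α : ℝ) (hα : 0 < α)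
    (hint : ∀ n : ℕ, Integrable (fun ω => |Y (n + 1) ω - Y n ω| ^ α) P)
    (hdecay :
      limsup (fun n : ℕ =>
        Real.log (∫ ω, |Y (n + 1) ω - Y n ω| ^ α ∂P) / (n + 1 : ℝ)) atTop < 0) :
    (∫⁻ ω, ENNReal.ofReal (|(⨆ n : ℕ, Y n ω)| ^ α) ∂P) < ⊤ ∧
    (∫⁻ ω, ENNReal.ofReal (|(⨅ n : ℕ, Y n ω)| ^ α) ∂P) < ⊤ :=
  moment_sup_inf_finite_general P Y hY0 α hα hint hdecay
end

section
/- Let Z, Z₁, Z₂, … be i.i.d. nonnegative random variables with P(Z > 0) > 0 and moment index ᾱ = sup{α ≥ 0 : E Z^α < ∞} satisfying ᾱ > 1. For ν > 0 let X_ν = Z₁ + ⋯ + Z_{N_ν} where N_ν is Poisson(ν) independent of the Z's. Then for each α ∈ (0, ᾱ), lim_{ν→∞} (log ν)^{−1} log E(X_ν^α) = α. -/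
/-!
Work with the `ℝ≥0∞`-valued sums `X_ν`. By Hölder's inequality `p ↦ log E X_ν^p` is convex on
`[0, β]`, and it vanishes at `0`. Fix `β ∈ (max α 1, ᾱ)`. Conditioning on `N_ν` gives
`E X_ν = ν E Z`, and, by the power mean inequality and the Poisson factorial moments
`E N_ν(N_ν - 1)⋯(N_ν - n + 1) = ν^n`, also `E X_ν^β ≤ E N_ν^β E Z^β = O(ν^β)`. Convexity then
traps `log E X_ν^α` within `O(1)` of `α log ν`: from above by interpolating `α` between `0` and
`β`, from below by interpolating `1` between `α` and `β` (between `0` and `α` if `α ≥ 1`).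
-/

open MeasureTheory Filter ProbabilityTheory Set Real
open scoped ENNReal NNReal Topology Nat

theorem tendsto_div_log_of_isBounded_sub {g : ℝ → ℝ} {α c C : ℝ}
    (hc : ∀ᶠ ν in atTop, c ≤ g ν - α * log ν) (hC : ∀ᶠ ν in atTop, g ν - α * log ν ≤ C) :
    Tendsto (fun ν => g ν / log ν) atTop (𝓝 α) := by
  have hlog : ∀ᶠ ν in atTop, 0 < log ν := tendsto_log_atTop.eventually_gt_atTop 0
  have hdiff : Tendsto (fun ν => (g ν - α * log ν) / log ν) atTop (𝓝 0) :=
    tendsto_of_tendsto_of_tendsto_of_le_of_le'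
      (tendsto_const_nhds.div_atTop tendsto_log_atTop)
      (tendsto_const_nhds.div_atTop tendsto_log_atTop)
      (by filter_upwards [hc, hlog] with ν h hl; exact div_le_div_of_nonneg_right h hl.le)
      (by filter_upwards [hC, hlog] with ν h hl; exact div_le_div_of_nonneg_right h hl.le)
  refine (add_zero α ▸ hdiff.const_add α).congr' ?_
  filter_upwards [hlog] with ν hl
  field_simp
  ring

theorem tendsto_div_log_of_convexOn {L : ℝ → ℝ → ℝ} {a b α β : ℝ} (hα : 0 < α) (hαβ : α < β)
    (hβ : 1 < β) (hconv : ∀ᶠ ν in atTop, ConvexOn ℝ (Icc 0 β) (L ν))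
    (h0 : ∀ᶠ ν in atTop, L ν 0 = 0) (h1 : ∀ᶠ ν in atTop, a + log ν ≤ L ν 1)
    (hβL : ∀ᶠ ν in atTop, L ν β ≤ b + β * log ν) :
    Tendsto (fun ν => L ν α / log ν) atTop (𝓝 α) := by
  have hβ0 : 0 < β := by linarith
  have interp : ∀ {f : ℝ → ℝ}, ConvexOn ℝ (Icc 0 β) f → ∀ {x y t : ℝ}, x ∈ Icc 0 β →
      y ∈ Icc 0 β → 0 ≤ t → t ≤ 1 → f (t * x + (1 - t) * y) ≤ t * f x + (1 - t) * f y :=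
    fun hf _ _ _ hx hy ht0 ht1 => hf.2 hx hy ht0 (sub_nonneg.2 ht1) (by ring)
  have hα_mem : α ∈ Icc 0 β := ⟨hα.le, hαβ.le⟩
  have h0_mem : (0 : ℝ) ∈ Icc 0 β := ⟨le_rfl, hβ0.le⟩
  have hβ_mem : β ∈ Icc 0 β := ⟨hβ0.le, le_rfl⟩
  have upper : ∀ᶠ ν in atTop, L ν α - α * log ν ≤ α / β * b := by
    filter_upwards [hconv, h0, hβL] with ν hf hf0 hfβ
    have := interp hf hβ_mem h0_mem (div_nonneg hα.le hβ0.le) ((div_le_one hβ0).2 hαβ.le)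
    rw [div_mul_cancel₀ _ hβ0.ne', mul_zero, add_zero, hf0, mul_zero, add_zero] at this
    have := mul_le_mul_of_nonneg_left hfβ (div_nonneg hα.le hβ0.le)
    rw [mul_add, ← mul_assoc, div_mul_cancel₀ _ hβ0.ne'] at this
    linarith
  obtain ⟨c, lower⟩ : ∃ c, ∀ᶠ ν in atTop, c ≤ L ν α - α * log ν := by
    rcases lt_or_ge α 1 with hα1 | hα1
    · set θ := (β - 1) / (β - α) with hθ
      have hθ0 : 0 < θ := div_pos (by linarith) (by linarith)
      have hθ1 : θ ≤ 1 := (div_le_one (by linarith)).2 (by linarith)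
      have hθc : θ * α + (1 - θ) * β = 1 := by rw [hθ]; field_simp [sub_ne_zero.2 hαβ.ne']; ring
      refine ⟨(a - (1 - θ) * b) / θ, ?_⟩
      filter_upwards [hconv, h1, hβL] with ν hf hf1 hfβ
      have := interp hf hα_mem hβ_mem hθ0.le hθ1
      rw [hθc] at this
      have := mul_le_mul_of_nonneg_left hfβ (sub_nonneg.2 hθ1)
      have := congrArg (· * log ν) hθc
      rw [div_le_iff₀ hθ0]
      linarith
    · refine ⟨α * a, ?_⟩
      filter_upwards [hconv, h0, h1] with ν hf hf0 hf1
      have := interp hf hα_mem h0_mem (inv_nonneg.2 hα.le) (inv_le_one_of_one_le₀ hα1)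
      rw [inv_mul_cancel₀ hα.ne', mul_zero, add_zero, hf0, mul_zero, add_zero] at this
      have := mul_le_mul_of_nonneg_left (hf1.trans this) hα.le
      rw [← mul_assoc, mul_inv_cancel₀ hα.ne', one_mul] at this
      linarith
  exact tendsto_div_log_of_isBounded_sub lower upper

section Moments

variable {Ω : Type*} [MeasurableSpace Ω] {μ : Measure Ω} {X : Ω → ℝ≥0∞}

theorem lintegral_rpow_interpolate (hX : AEMeasurable X μ) {r s a b : ℝ} (hr : 0 ≤ r)
    (hs : 0 ≤ s) (ha : 0 ≤ a) (hb : 0 ≤ b) (hab : a + b = 1) :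
    ∫⁻ ω, X ω ^ (a * r + b * s) ∂μ ≤ (∫⁻ ω, X ω ^ r ∂μ) ^ a * (∫⁻ ω, X ω ^ s ∂μ) ^ b := by
  calc ∫⁻ ω, X ω ^ (a * r + b * s) ∂μ = ∫⁻ ω, (X ω ^ r) ^ a * (X ω ^ s) ^ b ∂μ := by
        simp_rw [← ENNReal.rpow_mul]
        congr! 2 with ω
        rw [← ENNReal.rpow_add_of_nonneg _ _ (by positivity) (by positivity)]
        ring_nf
    _ ≤ _ := ENNReal.lintegral_mul_norm_pow_le (hX.pow_const r) (hX.pow_const s) ha hb hab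

theorem lintegral_rpow_le_lintegral_rpow_rpow [IsProbabilityMeasure μ] (hX : AEMeasurable X μ)
    {p q : ℝ} (hp : 0 ≤ p) (hpq : p ≤ q) :
    ∫⁻ ω, X ω ^ p ∂μ ≤ (∫⁻ ω, X ω ^ q ∂μ) ^ (p / q) := by
  rcases hp.eq_or_lt with rfl | hp
  · simp
  have hq : 0 < q := hp.trans_le hpq
  have h := lintegral_rpow_interpolate hX hq.le le_rfl (div_nonneg hp.le hq.le)
    (sub_nonneg.2 ((div_le_one hq).2 hpq)) (add_sub_cancel _ _) (μ := μ) (s := 0)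
  simpa [div_mul_cancel₀ _ hq.ne'] using h

theorem lintegral_rpow_pos (hX : AEMeasurable X μ) (hX0 : ¬ X =ᵐ[μ] 0) {p : ℝ} (hp : 0 ≤ p) :
    0 < ∫⁻ ω, X ω ^ p ∂μ := by
  refine pos_iff_ne_zero.2 fun h => hX0 ?_
  filter_upwards [(lintegral_eq_zero_iff' (hX.pow_const p)).1 h] with ω hω
  rcases hp.eq_or_lt with rfl | hp
  · simp at hω
  · simpa [ENNReal.rpow_eq_zero_iff, hp, hp.not_gt] using hω

theorem convexOn_log_lintegral_rpow [IsProbabilityMeasure μ] (hX : AEMeasurable X μ)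
    (hX0 : ¬ X =ᵐ[μ] 0) {β : ℝ} (hβ : ∫⁻ ω, X ω ^ β ∂μ ≠ ⊤) :
    ConvexOn ℝ (Icc 0 β) fun p => log (∫⁻ ω, X ω ^ p ∂μ).toReal := by
  have hfin : ∀ p ∈ Icc 0 β, ∫⁻ ω, X ω ^ p ∂μ ≠ ⊤ := fun p hp =>
    ne_top_of_le_ne_top (ENNReal.rpow_ne_top_of_nonneg (div_nonneg hp.1 (hp.1.trans hp.2)) hβ)
      (lintegral_rpow_le_lintegral_rpow_rpow hX hp.1 hp.2)
  refine ⟨convex_Icc 0 β, fun r hr s hs a b ha hb hab => ?_⟩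
  have hpos : ∀ p ∈ Icc 0 β, 0 < (∫⁻ ω, X ω ^ p ∂μ).toReal := fun p hp =>
    ENNReal.toReal_pos (lintegral_rpow_pos hX hX0 hp.1).ne' (hfin p hp)
  have hmem : a * r + b * s ∈ Icc (0 : ℝ) β := convex_Icc 0 β hr hs ha hb hab
  calc log (∫⁻ ω, X ω ^ (a • r + b • s) ∂μ).toReal
      ≤ log ((∫⁻ ω, X ω ^ r ∂μ) ^ a * (∫⁻ ω, X ω ^ s ∂μ) ^ b).toReal :=
        log_le_log (hpos _ hmem) (ENNReal.toReal_mono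
          (ENNReal.mul_ne_top (ENNReal.rpow_ne_top_of_nonneg ha (hfin r hr))
            (ENNReal.rpow_ne_top_of_nonneg hb (hfin s hs)))
          (lintegral_rpow_interpolate hX hr.1 hs.1 ha hb hab))
    _ = a • log (∫⁻ ω, X ω ^ r ∂μ).toReal + b • log (∫⁻ ω, X ω ^ s ∂μ).toReal := by
        rw [ENNReal.toReal_mul, ← ENNReal.toReal_rpow, ← ENNReal.toReal_rpow,
          log_mul (rpow_pos_of_pos (hpos r hr) a).ne' (rpow_pos_of_pos (hpos s hs) b).ne',
          log_rpow (hpos r hr), log_rpow (hpos s hs), smul_eq_mul, smul_eq_mul]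

end Moments

theorem tendsto_log_lintegral_rpow_div_log {Ω : Type*} [MeasurableSpace Ω] {μ : Measure Ω}
    [IsProbabilityMeasure μ] {X : ℝ → Ω → ℝ≥0∞} (hX : ∀ ν, Measurable (X ν)) {m K : ℝ≥0∞}
    (hm0 : m ≠ 0) (hm : m ≠ ⊤) (hK : K ≠ ⊤) {α β : ℝ} (hα : 0 < α) (hαβ : α < β) (hβ : 1 < β)
    (hX1 : ∀ᶠ ν in atTop, ∫⁻ ω, X ν ω ∂μ = m * ENNReal.ofReal ν)
    (hXβ : ∀ᶠ ν in atTop, ∫⁻ ω, X ν ω ^ β ∂μ ≤ K * ENNReal.ofReal ν ^ β) :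
    Tendsto (fun ν => log (∫⁻ ω, X ν ω ^ α ∂μ).toReal / log ν) atTop (𝓝 α) := by
  have hν : ∀ᶠ ν : ℝ in atTop, 0 < ν := eventually_gt_atTop 0
  have hfin : ∀ᶠ ν in atTop, ∫⁻ ω, X ν ω ^ β ∂μ ≠ ⊤ := by
    filter_upwards [hXβ] with ν h
    exact ne_top_of_le_ne_top (ENNReal.mul_ne_top hK
      (ENNReal.rpow_ne_top_of_nonneg (by linarith) ENNReal.ofReal_ne_top)) h
  have hX0 : ∀ᶠ ν in atTop, ¬ X ν =ᵐ[μ] 0 := by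
    filter_upwards [hX1, hν] with ν h hν hX0
    rw [lintegral_congr_ae hX0] at h
    simp [eq_comm, hm0] at h
    linarith
  refine tendsto_div_log_of_convexOn (L := fun ν p => log (∫⁻ ω, X ν ω ^ p ∂μ).toReal)
    (a := log m.toReal) (b := log K.toReal) hα hαβ hβ ?_ ?_ ?_ ?_
  · filter_upwards [hX0, hfin] with ν h0 h
    exact convexOn_log_lintegral_rpow (hX ν).aemeasurable h0 h
  · simp
  · filter_upwards [hX1, hν] with ν h hν
    simp only [ENNReal.rpow_one]
    rw [h, ENNReal.toReal_mul, ENNReal.toReal_ofReal hν.le,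
      log_mul (ENNReal.toReal_pos hm0 hm).ne' hν.ne']
  · filter_upwards [hXβ, hX0, hfin, hν] with ν h h0 hfin hν
    have hpos : 0 < (∫⁻ ω, X ν ω ^ β ∂μ).toReal :=
      ENNReal.toReal_pos (lintegral_rpow_pos (hX ν).aemeasurable h0 (by linarith)).ne' hfin
    have hle := ENNReal.toReal_mono (ENNReal.mul_ne_top hK
      (ENNReal.rpow_ne_top_of_nonneg (by linarith) ENNReal.ofReal_ne_top)) h
    rw [ENNReal.toReal_mul, ← ENNReal.toReal_rpow, ENNReal.toReal_ofReal hν.le] at hle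
    have hK0 : K.toReal ≠ 0 := left_ne_zero_of_mul (hpos.trans_le hle).ne'
    calc log (∫⁻ ω, X ν ω ^ β ∂μ).toReal ≤ log (K.toReal * ν ^ β) := log_le_log hpos hle
      _ = log K.toReal + β * log ν := by
        rw [log_mul hK0 (rpow_pos_of_pos hν β).ne', log_rpow hν]

theorem Nat.pow_le_two_pow_mul_descFactorial_add (n k : ℕ) :
    k ^ n ≤ 2 ^ n * k.descFactorial n + (2 * n) ^ n := by
  rcases le_or_gt k (2 * n) with h | h
  · exact (Nat.pow_le_pow_left h n).trans (Nat.le_add_left _ _)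
  · -- each factor `k - i` of the descending factorial is at least `k / 2`
    calc k ^ n = ∏ _i ∈ Finset.range n, k := by simp
      _ ≤ ∏ i ∈ Finset.range n, 2 * (k - i) :=
          Finset.prod_le_prod' fun i hi => by have := Finset.mem_range.1 hi; omega
      _ = 2 ^ n * k.descFactorial n := by
          rw [Finset.prod_mul_distrib, Nat.descFactorial_eq_prod_range]; simp
      _ ≤ _ := Nat.le_add_right _ _

namespace ProbabilityTheory

theorem lintegral_poissonMeasure (r : ℝ≥0) (f : ℕ → ℝ≥0∞) :
    ∫⁻ n, f n ∂poissonMeasure r = ∑' n, ENNReal.ofReal (exp (-r) * r ^ n / n !) * f n := by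
  simp [poissonMeasure, lintegral_sum_measure, mul_comm]

theorem hasSum_poissonMeasure_mul_descFactorial (r : ℝ≥0) (n : ℕ) :
    HasSum (fun k => exp (-r) * r ^ k / k ! * k.descFactorial n) ((r : ℝ) ^ n) := by
  rw [← hasSum_nat_add_iff' n, Finset.sum_eq_zero fun k hk => by
    simp [Nat.descFactorial_eq_zero_iff_lt.2 (Finset.mem_range.1 hk)], sub_zero]
  have h := (hasSum_one_poissonMeasure r).mul_left ((r : ℝ) ^ n)
  rw [mul_one] at h
  refine h.congr_fun fun j => ?_
  have hfac : ((j + n) ! : ℝ) = j ! * (j + n).descFactorial n := by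
    rw_mod_cast [← Nat.factorial_mul_descFactorial (Nat.le_add_left n j), Nat.add_sub_cancel]
  rw [hfac, pow_add]
  field_simp

theorem lintegral_descFactorial_poissonMeasure (r : ℝ≥0) (n : ℕ) :
    ∫⁻ k, (k.descFactorial n : ℝ≥0∞) ∂poissonMeasure r = (r : ℝ≥0∞) ^ n := by
  have h := hasSum_poissonMeasure_mul_descFactorial r n
  rw [lintegral_poissonMeasure, ← ENNReal.ofReal_coe_nnreal, ← ENNReal.ofReal_pow r.coe_nonneg,
    ← h.tsum_eq, ENNReal.ofReal_tsum_of_nonneg (fun k => by positivity) h.summable]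
  refine tsum_congr fun k => ?_
  rw [ENNReal.ofReal_mul (by positivity), ENNReal.ofReal_natCast]

theorem lintegral_natCast_poissonMeasure (r : ℝ≥0) :
    ∫⁻ k, (k : ℝ≥0∞) ∂poissonMeasure r = r := by
  simpa using lintegral_descFactorial_poissonMeasure r 1

theorem lintegral_pow_poissonMeasure_le (n : ℕ) {r : ℝ≥0} (hr : 1 ≤ r) :
    ∫⁻ k, (k : ℝ≥0∞) ^ n ∂poissonMeasure r ≤ (2 ^ n + (2 * n) ^ n) * (r : ℝ≥0∞) ^ n := by
  calc ∫⁻ k, (k : ℝ≥0∞) ^ n ∂poissonMeasure r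
      ≤ ∫⁻ k, 2 ^ n * (k.descFactorial n : ℝ≥0∞) + (2 * n) ^ n ∂poissonMeasure r :=
        lintegral_mono fun k => by
          exact_mod_cast Nat.cast_le.2 (Nat.pow_le_two_pow_mul_descFactorial_add n k)
    _ = 2 ^ n * (r : ℝ≥0∞) ^ n + (2 * n) ^ n := by
        rw [lintegral_add_right _ measurable_const, lintegral_const_mul _ (by fun_prop),
          lintegral_descFactorial_poissonMeasure]
        simp
    _ ≤ (2 ^ n + (2 * n) ^ n) * (r : ℝ≥0∞) ^ n := by
        rw [add_mul]
        gcongr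
        exact le_mul_of_one_le_right' (one_le_pow₀ (by exact_mod_cast hr))

theorem exists_lintegral_rpow_poissonMeasure_le {β : ℝ} (hβ : 0 ≤ β) :
    ∃ C ≠ ⊤, ∀ r : ℝ≥0, 1 ≤ r → ∫⁻ k, (k : ℝ≥0∞) ^ β ∂poissonMeasure r ≤ C * (r : ℝ≥0∞) ^ β := by
  set n := ⌊β⌋₊ + 1
  have hn : (0 : ℝ) < n := by positivity
  refine ⟨(2 ^ n + (2 * n) ^ n) ^ (β / n),
    ENNReal.rpow_ne_top_of_nonneg (by positivity) (by simp [ENNReal.mul_eq_top]), fun r hr => ?_⟩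
  calc ∫⁻ k, (k : ℝ≥0∞) ^ β ∂poissonMeasure r
      ≤ (∫⁻ k, (k : ℝ≥0∞) ^ (n : ℝ) ∂poissonMeasure r) ^ (β / n) :=
        lintegral_rpow_le_lintegral_rpow_rpow measurable_from_nat.aemeasurable hβ
          (by exact_mod_cast (Nat.lt_floor_add_one β).le)
    _ ≤ ((2 ^ n + (2 * n) ^ n) * (r : ℝ≥0∞) ^ n) ^ (β / n) := by
        simp_rw [ENNReal.rpow_natCast]
        gcongr
        exact lintegral_pow_poissonMeasure_le n hr
    _ = (2 ^ n + (2 * n) ^ n) ^ (β / n) * (r : ℝ≥0∞) ^ β := by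
        rw [ENNReal.mul_rpow_of_nonneg _ _ (by positivity), ← ENNReal.rpow_natCast (r : ℝ≥0∞) n,
          ← ENNReal.rpow_mul, mul_div_cancel₀ _ hn.ne']

theorem map_eq_poissonMeasure {Ω : Type*} [MeasurableSpace Ω] {μ : Measure Ω}
    {N : Ω → ℕ} (hN : Measurable N) {r : ℝ≥0}
    (h : ∀ k, μ {ω | N ω = k} = ENNReal.ofReal (exp (-r) * r ^ k / k !)) :
    μ.map N = poissonMeasure r :=
  Measure.ext_of_singleton fun k => by
    rw [Measure.map_apply hN (measurableSet_singleton k), poissonMeasure_singleton]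
    exact h k

end ProbabilityTheory

theorem lintegral_comp_eq_lintegral_map_of_indepFun {Ω ι E : Type*} [MeasurableSpace Ω]
    [MeasurableSpace ι] [Countable ι] [MeasurableSingletonClass ι] [MeasurableSpace E]
    {μ : Measure Ω} [IsFiniteMeasure μ] {N : Ω → ι} {Y : Ω → E} (hN : Measurable N)
    (hY : Measurable Y) (hNY : IndepFun N Y μ) {g : ι → E → ℝ≥0∞} (hg : ∀ i, Measurable (g i)) :
    ∫⁻ ω, g (N ω) (Y ω) ∂μ = ∫⁻ i, ∫⁻ ω, g i (Y ω) ∂μ ∂μ.map N := by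
  have hg' : Measurable (Function.uncurry g) :=
    (measurable_from_prod_countable_left (f := fun q : E × ι => g q.2 q.1)
      fun i => hg i).comp measurable_swap
  calc ∫⁻ ω, g (N ω) (Y ω) ∂μ = ∫⁻ q, Function.uncurry g q ∂μ.map fun ω => (N ω, Y ω) :=
        (lintegral_map hg' (hN.prodMk hY)).symm
    _ = ∫⁻ i, ∫⁻ y, g i y ∂μ.map Y ∂μ.map N := by
        rw [(indepFun_iff_map_prod_eq_prod_map_map hN.aemeasurable hY.aemeasurable).1 hNY,
          lintegral_prod _ hg'.aemeasurable]
        rfl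
    _ = ∫⁻ i, ∫⁻ ω, g i (Y ω) ∂μ ∂μ.map N :=
        lintegral_congr fun i => lintegral_map (hg i) hY

section CompoundSum

variable {Ω : Type*} [MeasurableSpace Ω] {μ : Measure Ω} {N : Ω → ℕ} {Y : ℕ → Ω → ℝ≥0∞}

noncomputable def compoundSum (N : Ω → ℕ) (Y : ℕ → Ω → ℝ≥0∞) (ω : Ω) : ℝ≥0∞ :=
  ∑ j ∈ Finset.range (N ω), Y j ω

theorem measurable_compoundSum (hN : Measurable N) (hY : ∀ j, Measurable (Y j)) :
    Measurable (compoundSum N Y) :=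
  (measurable_from_prod_countable_left (f := fun q : Ω × ℕ => ∑ j ∈ Finset.range q.2, Y j q.1)
    fun k => Finset.measurable_sum (Finset.range k) fun j _ => hY j).comp (measurable_id.prodMk hN)

theorem lintegral_compoundSum_rpow [IsFiniteMeasure μ] (hN : Measurable N)
    (hY : ∀ j, Measurable (Y j)) (hNY : IndepFun N (fun ω j => Y j ω) μ) (p : ℝ) :
    ∫⁻ ω, compoundSum N Y ω ^ p ∂μ =
      ∫⁻ k, ∫⁻ ω, (∑ j ∈ Finset.range k, Y j ω) ^ p ∂μ ∂μ.map N :=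
  lintegral_comp_eq_lintegral_map_of_indepFun hN (measurable_pi_lambda _ hY) hNY
    (g := fun k y => (∑ j ∈ Finset.range k, y j) ^ p)
    fun k => (Finset.measurable_sum (Finset.range k) fun j _ => measurable_pi_apply j).pow_const p

theorem lintegral_sum_range_of_identDistrib (hY : ∀ j, IdentDistrib (Y j) (Y 0) μ μ) (k : ℕ) :
    ∫⁻ ω, ∑ j ∈ Finset.range k, Y j ω ∂μ = k * ∫⁻ ω, Y 0 ω ∂μ := by
  rw [lintegral_finsetSum' _ fun j _ => (hY j).aemeasurable_fst]
  simp [fun j => (hY j).lintegral_eq]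

theorem lintegral_sum_range_rpow_le_of_identDistrib (hY : ∀ j, IdentDistrib (Y j) (Y 0) μ μ)
    {p : ℝ} (hp : 1 ≤ p) (k : ℕ) :
    ∫⁻ ω, (∑ j ∈ Finset.range k, Y j ω) ^ p ∂μ ≤ (k : ℝ≥0∞) ^ p * ∫⁻ ω, Y 0 ω ^ p ∂μ := by
  have hYp : ∀ j, IdentDistrib (fun ω => Y j ω ^ p) (fun ω => Y 0 ω ^ p) μ μ := fun j =>
    (hY j).comp (measurable_id.pow_const p)
  calc ∫⁻ ω, (∑ j ∈ Finset.range k, Y j ω) ^ p ∂μ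
      ≤ ∫⁻ ω, (k : ℝ≥0∞) ^ (p - 1) * ∑ j ∈ Finset.range k, Y j ω ^ p ∂μ :=
        lintegral_mono fun ω => by
          simpa using ENNReal.rpow_sum_le_const_mul_sum_rpow (Finset.range k) (fun j => Y j ω) hp
    _ = (k : ℝ≥0∞) ^ (p - 1) * (k * ∫⁻ ω, Y 0 ω ^ p ∂μ) := by
        rw [lintegral_const_mul' _ _ (ENNReal.rpow_ne_top_of_nonneg (by linarith) (by simp)),
          lintegral_sum_range_of_identDistrib hYp]
    _ = (k : ℝ≥0∞) ^ p * ∫⁻ ω, Y 0 ω ^ p ∂μ := by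
        rw [← mul_assoc]
        congr 1
        rcases k.eq_zero_or_pos with rfl | hk
        · simp [ENNReal.zero_rpow_of_pos (by linarith : 0 < p)]
        · conv_rhs => rw [← sub_add_cancel p 1, ENNReal.rpow_add _ _ (by positivity) (by simp),
            ENNReal.rpow_one]

theorem lintegral_compoundSum [IsFiniteMeasure μ] (hN : Measurable N)
    (hY : ∀ j, Measurable (Y j)) (hNY : IndepFun N (fun ω j => Y j ω) μ)
    (hYid : ∀ j, IdentDistrib (Y j) (Y 0) μ μ) :
    ∫⁻ ω, compoundSum N Y ω ∂μ = (∫⁻ k, (k : ℝ≥0∞) ∂μ.map N) * ∫⁻ ω, Y 0 ω ∂μ := by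
  calc ∫⁻ ω, compoundSum N Y ω ∂μ = ∫⁻ ω, compoundSum N Y ω ^ (1 : ℝ) ∂μ := by simp
    _ = ∫⁻ k, (k : ℝ≥0∞) * ∫⁻ ω, Y 0 ω ∂μ ∂μ.map N := by
        rw [lintegral_compoundSum_rpow hN hY hNY]
        simp [lintegral_sum_range_of_identDistrib hYid]
    _ = _ := lintegral_mul_const _ measurable_from_nat

theorem lintegral_compoundSum_rpow_le [IsFiniteMeasure μ] (hN : Measurable N)
    (hY : ∀ j, Measurable (Y j)) (hNY : IndepFun N (fun ω j => Y j ω) μ)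
    (hYid : ∀ j, IdentDistrib (Y j) (Y 0) μ μ) {p : ℝ} (hp : 1 ≤ p) :
    ∫⁻ ω, compoundSum N Y ω ^ p ∂μ ≤
      (∫⁻ k, (k : ℝ≥0∞) ^ p ∂μ.map N) * ∫⁻ ω, Y 0 ω ^ p ∂μ := by
  rw [lintegral_compoundSum_rpow hN hY hNY, ← lintegral_mul_const _ measurable_from_nat]
  exact lintegral_mono fun k => lintegral_sum_range_rpow_le_of_identDistrib hYid hp k

end CompoundSum

theorem tendsto_log_lintegral_compoundSum_rpow_div_log {Ω : Type*} [MeasurableSpace Ω]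
    {μ : Measure Ω} [IsProbabilityMeasure μ] {N : ℝ → Ω → ℕ} {Y : ℕ → Ω → ℝ≥0∞}
    (hN : ∀ ν, Measurable (N ν)) (hlaw : ∀ ν, 0 < ν → μ.map (N ν) = poissonMeasure ν.toNNReal)
    (hY : ∀ j, Measurable (Y j)) (hNY : ∀ ν, 0 < ν → IndepFun (N ν) (fun ω j => Y j ω) μ)
    (hYid : ∀ j, IdentDistrib (Y j) (Y 0) μ μ) (hm0 : ∫⁻ ω, Y 0 ω ∂μ ≠ 0) {α β : ℝ}
    (hα : 0 < α) (hαβ : α < β) (hβ : 1 < β) (hM : ∫⁻ ω, Y 0 ω ^ β ∂μ ≠ ⊤) :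
    Tendsto (fun ν => log (∫⁻ ω, compoundSum (N ν) Y ω ^ α ∂μ).toReal / log ν) atTop (𝓝 α) := by
  have hm : ∫⁻ ω, Y 0 ω ∂μ ≠ ⊤ := by
    simpa using ne_top_of_le_ne_top (ENNReal.rpow_ne_top_of_nonneg (by positivity) hM)
      (lintegral_rpow_le_lintegral_rpow_rpow (hY 0).aemeasurable zero_le_one hβ.le)
  obtain ⟨C, hC, hCβ⟩ := exists_lintegral_rpow_poissonMeasure_le (β := β) (by positivity)
  refine tendsto_log_lintegral_rpow_div_log (fun ν => measurable_compoundSum (hN ν) hY)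
    hm0 hm (ENNReal.mul_ne_top hC hM) hα hαβ hβ ?_ ?_
  · filter_upwards [eventually_gt_atTop 0] with ν hν
    rw [lintegral_compoundSum (hN ν) hY (hNY ν hν) hYid, hlaw ν hν,
      lintegral_natCast_poissonMeasure, mul_comm]
    rfl
  · filter_upwards [eventually_ge_atTop 1] with ν hν
    calc _ ≤ _ := lintegral_compoundSum_rpow_le (hN ν) hY (hNY ν (by linarith)) hYid hβ.le
      _ ≤ C * ENNReal.ofReal ν ^ β * ∫⁻ ω, Y 0 ω ^ β ∂μ := by
          rw [hlaw ν (by linarith)]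
          gcongr
          exact hCβ _ (by simpa using hν)
      _ = _ := by ring

theorem integral_rpow_sum_range_eq_toReal_lintegral {Ω : Type*} [MeasurableSpace Ω]
    {μ : Measure Ω} {N : Ω → ℕ} {Z : ℕ → Ω → ℝ} (hN : Measurable N)
    (hZ : ∀ j, Measurable (Z j)) (hZ0 : ∀ j ω, 0 ≤ Z j ω) {α : ℝ} (hα : 0 ≤ α) :
    ∫ ω, (∑ j ∈ Finset.range (N ω), Z j ω) ^ α ∂μ =
      (∫⁻ ω, compoundSum N (fun j ω => ENNReal.ofReal (Z j ω)) ω ^ α ∂μ).toReal := by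
  rw [← integral_toReal ((measurable_compoundSum hN fun j => (hZ j).ennreal_ofReal).pow_const α
    ).aemeasurable (ae_of_all _ fun ω => ENNReal.rpow_lt_top_of_nonneg hα (by simp [compoundSum]))]
  refine integral_congr_ae (ae_of_all _ fun ω => ?_)
  simp only [compoundSum]
  rw [← ENNReal.ofReal_sum_of_nonneg fun j _ => hZ0 j ω, ← ENNReal.toReal_rpow,
    ENNReal.toReal_ofReal (Finset.sum_nonneg fun j _ => hZ0 j ω)]

theorem compound_poisson_moment_asymptotics_general
    {Ω : Type*} [MeasurableSpace Ω] (P : Measure Ω) [IsProbabilityMeasure P]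
    (Z : ℕ → Ω → ℝ) (hZmeas : ∀ j, Measurable (Z j))
    (hZident : ∀ j, Measure.map (Z j) P = Measure.map (Z 0) P)
    (hZnonneg : ∀ j, ∀ ω, 0 ≤ Z j ω)
    (hZpos : 0 < P {ω | 0 < Z 0 ω})
    (αbar : ℝ)
    (hαbar : αbar = sSup {α : ℝ | 0 ≤ α ∧ Integrable (fun ω => Z 0 ω ^ α) P})
    (hαbar1 : 1 < αbar)
    (N : ℝ → Ω → ℕ) (hNmeas : ∀ ν, Measurable (N ν))
    (hNpoisson : ∀ ν : ℝ, 0 < ν → ∀ k : ℕ,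
      P {ω | N ν ω = k} =
        ENNReal.ofReal (Real.exp (-ν) * ν ^ k / (Nat.factorial k)))
    (hNindep : ∀ ν : ℝ, 0 < ν → IndepFun (N ν) (fun ω => fun j => Z j ω) P)
    (α : ℝ) (hα0 : 0 < α) (hααbar : α < αbar) :
    Tendsto (fun ν : ℝ =>
        Real.log (∫ ω, (∑ j ∈ Finset.range (N ν ω), Z j ω) ^ α ∂P) / Real.log ν)
      atTop (nhds α) := by
  subst hαbar
  obtain ⟨β, ⟨hβ0, hZβ⟩, hβ⟩ :=
    exists_lt_of_lt_csSup (by exact ⟨0, le_rfl, by simp⟩) (max_lt hααbar hαbar1)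
  obtain ⟨hαβ, hβ1⟩ := max_lt_iff.1 hβ
  set Y : ℕ → Ω → ℝ≥0∞ := fun j ω => ENNReal.ofReal (Z j ω)
  have hY : ∀ j, Measurable (Y j) := fun j => (hZmeas j).ennreal_ofReal
  have hYid : ∀ j, IdentDistrib (Y j) (Y 0) P P := fun j =>
    (show IdentDistrib (Z j) (Z 0) P P from
      ⟨(hZmeas j).aemeasurable, (hZmeas 0).aemeasurable, hZident j⟩).comp ENNReal.measurable_ofReal
  have hind : ∀ ν, 0 < ν → IndepFun (N ν) (fun ω j => Y j ω) P := fun ν hν =>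
    (hNindep ν hν).comp measurable_id
      (measurable_pi_lambda _ fun j => ENNReal.measurable_ofReal.comp (measurable_pi_apply j))
  have hlaw : ∀ ν, 0 < ν → P.map (N ν) = poissonMeasure ν.toNNReal := fun ν hν =>
    map_eq_poissonMeasure (hNmeas ν) (by simpa [Real.coe_toNNReal _ hν.le] using hNpoisson ν hν)
  have hm0 : ∫⁻ ω, Y 0 ω ∂P ≠ 0 := by
    rw [← pos_iff_ne_zero, lintegral_pos_iff_support (hY 0)]
    simpa [Y, Function.support] using hZpos
  have hM : ∫⁻ ω, Y 0 ω ^ β ∂P ≠ ⊤ := by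
    simpa [Y, ENNReal.ofReal_rpow_of_nonneg (hZnonneg 0 _) hβ0] using hZβ.lintegral_lt_top.ne
  simp_rw [integral_rpow_sum_range_eq_toReal_lintegral (hNmeas _) hZmeas hZnonneg hα0.le]
  exact tendsto_log_lintegral_compoundSum_rpow_div_log hNmeas hlaw hY hind hYid hm0 hα0 hαβ hβ1 hM

/-- Lemma 6.1 (first part): for i.i.d. nonnegative claims `Z` with moment index
`ᾱ > 1` and `X ν` a compound Poisson sum with intensity `ν`, one has
`(log ν)⁻¹ log E(X_ν^α) → α` as `ν → ∞`, for every `α ∈ (0, ᾱ)`. -/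
theorem compound_poisson_moment_asymptotics
    {Ω : Type*} [MeasurableSpace Ω] (P : Measure Ω) [IsProbabilityMeasure P]
    (Z : ℕ → Ω → ℝ) (hZmeas : ∀ j, Measurable (Z j))
    (hZindep : iIndepFun Z P)
    (hZident : ∀ j, Measure.map (Z j) P = Measure.map (Z 0) P)
    (hZnonneg : ∀ j, ∀ ω, 0 ≤ Z j ω)
    (hZpos : 0 < P {ω | 0 < Z 0 ω})
    (αbar : ℝ)
    (hαbar : αbar = sSup {α : ℝ | 0 ≤ α ∧ Integrable (fun ω => Z 0 ω ^ α) P})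
    (hαbar1 : 1 < αbar)
    (N : ℝ → Ω → ℕ) (hNmeas : ∀ ν, Measurable (N ν))
    (hNpoisson : ∀ ν : ℝ, 0 < ν → ∀ k : ℕ,
      P {ω | N ν ω = k} =
        ENNReal.ofReal (Real.exp (-ν) * ν ^ k / (Nat.factorial k)))
    (hNindep : ∀ ν : ℝ, 0 < ν → IndepFun (N ν) (fun ω => fun j => Z j ω) P)
    (α : ℝ) (hα0 : 0 < α) (hααbar : α < αbar) :
    Tendsto (fun ν : ℝ =>
        Real.log (∫ ω, (∑ j ∈ Finset.range (N ν ω), Z j ω) ^ α ∂P) / Real.log ν)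
      atTop (nhds α) :=
  compound_poisson_moment_asymptotics_general P Z hZmeas hZident hZnonneg hZpos αbar hαbar hαbar1 N
    hNmeas hNpoisson hNindep α hα0 hααbar
end

section
/- Let (ξ_n) be positive random variables with Λ_ξ(α) = limsup_n n^{−1} log E(ξ_n^α) satisfying lim_{α→0+} Λ_ξ(α) = 0 and lim_{α→∞} Λ_ξ(α) = −∞ (hypothesis H1). Then Λ_ξ is strictly decreasing on (0,∞), and for every ε > 0 there is δ > 0 such that for all α ≥ 1+ε, E(ξ_n^α) = O(exp(n(Λ_ξ(1) − δ))) as n → ∞, and P(ξ_n > 1) = O(exp(n(Λ_ξ(1) − δ))). -/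
/-!
Hölder's inequality makes `α ↦ log E(ξ_n^α)` convex, hence so is its normalised limsup `Λ`
(as far as the extended-real arithmetic allows), and `Λ 0 = 0`. Convexity through the point `0`
gives `Λ (s * γ) ≤ s * Λ γ` for `s ∈ [0, 1]`, which together with (H1) forces `Λ` to be finite
on `(0, ∞)`. A real convex function tending to `-∞` is strictly decreasing: a non-negative slope
anywhere would persist to the right. Then `Λ α ≤ Λ (1 + ε) < Λ 1 - δ` for `α ≥ 1 + ε` bounds the
moments, and Chebyshev's inequality `P(ξ_n > 1) ≤ E(ξ_n^(1+ε))` bounds the tail.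
-/

open MeasureTheory Filter Set Topology
open scoped ENNReal

theorem ConvexOn.strictAntiOn_of_tendsto_atBot {s : Set ℝ} {f : ℝ → ℝ} (hf : ConvexOn ℝ s f)
    (hs : IsUpperSet s) (hlim : Tendsto f atTop atBot) : StrictAntiOn f s := by
  intro x hx y hy hxy
  by_contra! hle
  obtain ⟨z, hyz, hz⟩ := ((eventually_gt_atTop y).and (hlim.eventually_lt_atBot (f y))).exists
  have hslope := hf.slope_mono_adjacent hx (hs hyz.le hy) hxy hyz
  have hleft : 0 ≤ (f y - f x) / (y - x) := div_nonneg (by linarith) (by linarith)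
  have hright : (f z - f y) / (z - y) < 0 := div_neg_of_neg_of_pos (by linarith) (by linarith)
  linarith

theorem eventually_le_ofReal_exp_of_limsup_lt {a : ℕ → ℝ≥0∞} {c : ℝ}
    (h : limsup (fun n : ℕ => (((n : ℝ)⁻¹ : ℝ) : EReal) * ENNReal.log (a n)) atTop < c) :
    ∀ᶠ n : ℕ in atTop, a n ≤ ENNReal.ofReal (Real.exp (n * c)) := by
  filter_upwards [eventually_lt_of_limsup_lt h, eventually_gt_atTop 0] with n hn hn₀
  have hn₀' : (0 : ℝ) < n := Nat.cast_pos.2 hn₀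
  rw [← ENNReal.log_le_log_iff, ENNReal.log_ofReal_of_pos (Real.exp_pos _), Real.log_exp,
    EReal.coe_mul]
  calc ENNReal.log (a n)
        = ((n : ℝ) : EReal) * ((((n : ℝ)⁻¹ : ℝ) : EReal) * ENNReal.log (a n)) := by
        rw [← mul_assoc, ← EReal.coe_mul, mul_inv_cancel₀ hn₀'.ne', EReal.coe_one, one_mul]
    _ ≤ ((n : ℝ) : EReal) * c := mul_le_mul_of_nonneg_left hn.le (EReal.coe_nonneg.2 hn₀'.le)

section Moments

variable {Ω : Type*} [MeasurableSpace Ω] {P : Measure Ω}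

noncomputable def rpowMoment (P : Measure Ω) (X : Ω → ℝ) (α : ℝ) : ℝ≥0∞ :=
  ∫⁻ ω, ENNReal.ofReal (X ω ^ α) ∂P

theorem rpowMoment_zero [IsProbabilityMeasure P] (X : Ω → ℝ) : rpowMoment P X 0 = 1 := by
  simp [rpowMoment]

theorem measure_one_lt_le_rpowMoment {X : Ω → ℝ} (hX : AEMeasurable X P) {α : ℝ} (hα : 0 ≤ α) :
    P {ω | 1 < X ω} ≤ rpowMoment P X α :=
  calc P {ω | 1 < X ω} ≤ P {ω | 1 ≤ ENNReal.ofReal (X ω ^ α)} :=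
        measure_mono fun ω hω => ENNReal.one_le_ofReal.2 (Real.one_le_rpow (le_of_lt hω) hα)
    _ ≤ rpowMoment P X α := by
        simpa [rpowMoment] using mul_meas_ge_le_lintegral₀
          (ENNReal.measurable_ofReal.comp_aemeasurable (hX.pow_const α)) 1

theorem rpowMoment_convex_comb_le {X : Ω → ℝ} (hX : AEMeasurable X P)
    (hXpos : ∀ᵐ ω ∂P, 0 < X ω) {t : ℝ} (ht₀ : 0 ≤ t) (ht₁ : t ≤ 1) (α γ : ℝ) :
    rpowMoment P X (t * α + (1 - t) * γ) ≤ rpowMoment P X α ^ t * rpowMoment P X γ ^ (1 - t) := by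
  have hmeas (β : ℝ) : AEMeasurable (fun ω => ENNReal.ofReal (X ω ^ β)) P :=
    ENNReal.measurable_ofReal.comp_aemeasurable (hX.pow_const β)
  calc rpowMoment P X (t * α + (1 - t) * γ)
      = ∫⁻ ω, ENNReal.ofReal (X ω ^ α) ^ t * ENNReal.ofReal (X ω ^ γ) ^ (1 - t) ∂P := by
        refine lintegral_congr_ae ?_
        filter_upwards [hXpos] with ω hω
        rw [← ENNReal.ofReal_rpow_of_pos hω, ← ENNReal.ofReal_rpow_of_pos hω,
          ← ENNReal.ofReal_rpow_of_pos hω, ← ENNReal.rpow_mul, ← ENNReal.rpow_mul,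
          ← ENNReal.rpow_add _ _ (by simpa using hω) ENNReal.ofReal_ne_top]
        ring_nf
    _ ≤ _ := ENNReal.lintegral_mul_norm_pow_le (hmeas α) (hmeas γ) ht₀ (by linarith) (by ring)

end Moments

section LimitingCumulant

variable {Ω : Type*} [MeasurableSpace Ω] {P : Measure Ω} {ξ : ℕ → Ω → ℝ}

noncomputable def limitingCumulant (P : Measure Ω) (ξ : ℕ → Ω → ℝ) (α : ℝ) : EReal :=
  limsup (fun n : ℕ => (((n : ℝ)⁻¹ : ℝ) : EReal) * ENNReal.log (rpowMoment P (ξ n) α)) atTop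

theorem limitingCumulant_zero [IsProbabilityMeasure P] : limitingCumulant P ξ 0 = 0 := by
  simp [limitingCumulant, rpowMoment_zero]

theorem limitingCumulant_convex_comb_le (hξ : ∀ n, AEMeasurable (ξ n) P)
    (hξpos : ∀ n, ∀ᵐ ω ∂P, 0 < ξ n ω) {t : ℝ} (ht₀ : 0 ≤ t) (ht₁ : t ≤ 1) {α : ℝ} (γ : ℝ)
    (hα_bot : limitingCumulant P ξ α ≠ ⊥) (hα_top : limitingCumulant P ξ α ≠ ⊤) :
    limitingCumulant P ξ (t * α + (1 - t) * γ) ≤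
      t * limitingCumulant P ξ α + ((1 - t : ℝ) : EReal) * limitingCumulant P ξ γ := by
  set u : ℕ → EReal := fun n => (((n : ℝ)⁻¹ : ℝ) : EReal) * ENNReal.log (rpowMoment P (ξ n) α)
  set v : ℕ → EReal := fun n => (((n : ℝ)⁻¹ : ℝ) : EReal) * ENNReal.log (rpowMoment P (ξ n) γ)
  have hpointwise (n : ℕ) :
      (((n : ℝ)⁻¹ : ℝ) : EReal) * ENNReal.log (rpowMoment P (ξ n) (t * α + (1 - t) * γ)) ≤
        t * u n + ((1 - t : ℝ) : EReal) * v n := by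
    have hn : (0 : EReal) ≤ (((n : ℝ)⁻¹ : ℝ) : EReal) := EReal.coe_nonneg.2 (by positivity)
    have hlog := ENNReal.log_monotone (rpowMoment_convex_comb_le (hξ n) (hξpos n) ht₀ ht₁ α γ)
    rw [ENNReal.log_mul_add, ENNReal.log_rpow, ENNReal.log_rpow] at hlog
    refine (mul_le_mul_of_nonneg_left hlog hn).trans_eq ?_
    rw [EReal.left_distrib_of_nonneg_of_ne_top hn (EReal.coe_ne_top _), mul_left_comm,
      mul_left_comm (((n : ℝ)⁻¹ : ℝ) : EReal)]
  have htΛ : limsup (fun n => (t : EReal) * u n) atTop = t * limitingCumulant P ξ α :=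
    EReal.limsup_const_mul_of_nonneg_of_ne_top (EReal.coe_nonneg.2 ht₀) (EReal.coe_ne_top t)
  calc limitingCumulant P ξ (t * α + (1 - t) * γ)
      ≤ limsup ((fun n => (t : EReal) * u n) + fun n => ((1 - t : ℝ) : EReal) * v n) atTop :=
        limsup_le_limsup (.of_forall hpointwise)
    _ ≤ limsup (fun n => (t : EReal) * u n) atTop
          + limsup (fun n => ((1 - t : ℝ) : EReal) * v n) atTop := by
        refine EReal.limsup_add_le (.inl ?_) (.inl ?_) <;> rw [htΛ]
        · exact (EReal.mul_ne_bot _ _).2 ⟨.inl (EReal.coe_ne_bot t), .inr hα_bot,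
            .inl (EReal.coe_ne_top t), .inl (EReal.coe_nonneg.2 ht₀)⟩
        · exact (EReal.mul_ne_top _ _).2 ⟨.inl (EReal.coe_ne_bot t), .inl (EReal.coe_nonneg.2 ht₀),
            .inl (EReal.coe_ne_top t), .inr hα_top⟩
    _ = t * limitingCumulant P ξ α + ((1 - t : ℝ) : EReal) * limitingCumulant P ξ γ := by
        rw [htΛ, EReal.limsup_const_mul_of_nonneg_of_ne_top (EReal.coe_nonneg.2 (by linarith))
          (EReal.coe_ne_top _)]
        rfl

theorem limitingCumulant_mul_le [IsProbabilityMeasure P] (hξ : ∀ n, AEMeasurable (ξ n) P)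
    (hξpos : ∀ n, ∀ᵐ ω ∂P, 0 < ξ n ω) {s : ℝ} (hs₀ : 0 ≤ s) (hs₁ : s ≤ 1) (γ : ℝ) :
    limitingCumulant P ξ (s * γ) ≤ s * limitingCumulant P ξ γ := by
  simpa [limitingCumulant_zero] using limitingCumulant_convex_comb_le hξ hξpos
    (t := 1 - s) (by linarith) (by linarith) (α := 0) γ (by simp [limitingCumulant_zero])
    (by simp [limitingCumulant_zero])

end LimitingCumulant

section H1

variable {Ω : Type*} [MeasurableSpace Ω] {P : Measure Ω} [IsProbabilityMeasure P]
  {ξ : ℕ → Ω → ℝ}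

theorem limitingCumulant_ne_bot (hξ : ∀ n, AEMeasurable (ξ n) P)
    (hξpos : ∀ n, ∀ᵐ ω ∂P, 0 < ξ n ω)
    (hzero : Tendsto (limitingCumulant P ξ) (𝓝[>] 0) (𝓝 0)) {α : ℝ} (hα : 0 < α) :
    limitingCumulant P ξ α ≠ ⊥ := by
  obtain ⟨s, ⟨hs₀, hsα⟩, hs⟩ :=
    ((eventually_mem_set.2 (Ioo_mem_nhdsGT hα)).and
      (hzero.eventually_ne EReal.zero_ne_bot)).exists
  intro hbot
  have hle := limitingCumulant_mul_le hξ hξpos (div_pos hs₀ hα).le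
    ((div_le_one hα).2 hsα.le) α
  rw [div_mul_cancel₀ s hα.ne', hbot, EReal.coe_mul_bot_of_pos (div_pos hs₀ hα)] at hle
  exact hs (le_bot_iff.1 hle)

theorem limitingCumulant_ne_top (hξ : ∀ n, AEMeasurable (ξ n) P)
    (hξpos : ∀ n, ∀ᵐ ω ∂P, 0 < ξ n ω)
    (hinfty : Tendsto (limitingCumulant P ξ) atTop (𝓝 ⊥)) {α : ℝ} (hα : 0 ≤ α) :
    limitingCumulant P ξ α ≠ ⊤ := by
  obtain ⟨γ, hαγ, hγ⟩ :=
    ((eventually_gt_atTop α).and (hinfty.eventually (Iio_mem_nhds EReal.bot_lt_zero))).exists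
  have hγ₀ : 0 < γ := hα.trans_lt hαγ
  refine lt_top_iff_ne_top.1 ?_
  calc limitingCumulant P ξ α = limitingCumulant P ξ (α / γ * γ) := by
        rw [div_mul_cancel₀ α hγ₀.ne']
    _ ≤ (α / γ : ℝ) * limitingCumulant P ξ γ :=
        limitingCumulant_mul_le hξ hξpos (div_nonneg hα hγ₀.le) ((div_le_one hγ₀).2 hαγ.le) γ
    _ ≤ (α / γ : ℝ) * 0 :=
        mul_le_mul_of_nonneg_left hγ.le (EReal.coe_nonneg.2 (div_nonneg hα hγ₀.le))
    _ < ⊤ := by simp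

theorem limitingCumulant_eq_coe_toReal (hξ : ∀ n, AEMeasurable (ξ n) P)
    (hξpos : ∀ n, ∀ᵐ ω ∂P, 0 < ξ n ω)
    (hzero : Tendsto (limitingCumulant P ξ) (𝓝[>] 0) (𝓝 0))
    (hinfty : Tendsto (limitingCumulant P ξ) atTop (𝓝 ⊥)) {α : ℝ} (hα : 0 < α) :
    limitingCumulant P ξ α = (limitingCumulant P ξ α).toReal :=
  (EReal.coe_toReal (limitingCumulant_ne_top hξ hξpos hinfty hα.le)
    (limitingCumulant_ne_bot hξ hξpos hzero hα)).symm

theorem strictAntiOn_toReal_limitingCumulant (hξ : ∀ n, AEMeasurable (ξ n) P)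
    (hξpos : ∀ n, ∀ᵐ ω ∂P, 0 < ξ n ω)
    (hzero : Tendsto (limitingCumulant P ξ) (𝓝[>] 0) (𝓝 0))
    (hinfty : Tendsto (limitingCumulant P ξ) atTop (𝓝 ⊥)) :
    StrictAntiOn (fun α => (limitingCumulant P ξ α).toReal) (Ioi 0) := by
  have hcoe {α : ℝ} (hα : 0 < α) := limitingCumulant_eq_coe_toReal hξ hξpos hzero hinfty hα
  have hconvex : ConvexOn ℝ (Ioi 0) (fun α => (limitingCumulant P ξ α).toReal) := by
    refine ⟨convex_Ioi 0, fun x (hx : 0 < x) y (hy : 0 < y) a b ha hb hab => ?_⟩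
    obtain rfl : b = 1 - a := by linarith
    have hle := limitingCumulant_convex_comb_le hξ hξpos ha (by linarith) y
      (limitingCumulant_ne_bot hξ hξpos hzero hx) (limitingCumulant_ne_top hξ hξpos hinfty hx.le)
    have hxy : 0 < a * x + (1 - a) * y := convex_Ioi (0 : ℝ) hx hy ha hb hab
    rw [hcoe hx, hcoe hy, hcoe hxy] at hle
    exact_mod_cast hle
  have hlim : Tendsto (fun α => (limitingCumulant P ξ α).toReal) atTop atBot := by
    refine tendsto_atBot.2 fun b => ?_
    filter_upwards [hinfty.eventually (Iio_mem_nhds (EReal.bot_lt_coe b)),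
      eventually_gt_atTop 0] with α hαb hα
    rw [hcoe hα] at hαb
    exact_mod_cast hαb.le
  exact hconvex.strictAntiOn_of_tendsto_atBot (isUpperSet_Ioi 0) hlim

end H1

/-- Under hypothesis (H1), the limiting cumulant function `Λ_ξ` is strictly
decreasing on `(0,∞)`, `Λ_ξ(1)` is finite, and for every `ε > 0` there is
`δ > 0` with `E(ξ_n^α) = O(exp(n(Λ_ξ(1) − δ)))` for all `α ≥ 1 + ε`, and
`P(ξ_n > 1) = O(exp(n(Λ_ξ(1) − δ)))`. -/
theorem limiting_cumulant_strictAnti_and_moment_bound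
    {Ω : Type*} [MeasurableSpace Ω] (P : Measure Ω) [IsProbabilityMeasure P]
    (ξ : ℕ → Ω → ℝ) (hξmeas : ∀ n, Measurable (ξ n))
    (hξpos : ∀ n, ∀ᵐ ω ∂P, 0 < ξ n ω)
    (Λ : ℝ → EReal)
    (hΛ : ∀ α : ℝ, Λ α =
      limsup (fun n : ℕ =>
        (((n : ℝ)⁻¹ : ℝ) : EReal) *
          ENNReal.log (∫⁻ ω, ENNReal.ofReal (ξ n ω ^ α) ∂P)) atTop)
    (hH1zero : Tendsto Λ (nhdsWithin 0 (Set.Ioi 0)) (nhds (0 : EReal)))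
    (hH1infty : Tendsto Λ atTop (nhds (⊥ : EReal))) :
    StrictAntiOn Λ (Set.Ioi (0 : ℝ)) ∧
    ∃ l : ℝ, Λ 1 = (l : EReal) ∧
      ∀ ε > (0 : ℝ), ∃ δ > (0 : ℝ),
        (∀ α : ℝ, 1 + ε ≤ α → ∃ C : ℝ, ∀ᶠ n : ℕ in atTop,
          (∫⁻ ω, ENNReal.ofReal (ξ n ω ^ α) ∂P) ≤
            ENNReal.ofReal (C * Real.exp (n * (l - δ)))) ∧
        (∃ C : ℝ, ∀ᶠ n : ℕ in atTop,
          P {ω | 1 < ξ n ω} ≤ ENNReal.ofReal (C * Real.exp (n * (l - δ)))) := by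
  obtain rfl : Λ = limitingCumulant P ξ := funext hΛ
  have hξ (n : ℕ) : AEMeasurable (ξ n) P := (hξmeas n).aemeasurable
  set f := fun α => (limitingCumulant P ξ α).toReal
  have hcoe {α : ℝ} (hα : 0 < α) := limitingCumulant_eq_coe_toReal hξ hξpos hH1zero hH1infty hα
  have hanti : StrictAntiOn f (Ioi 0) :=
    strictAntiOn_toReal_limitingCumulant hξ hξpos hH1zero hH1infty
  refine ⟨fun x hx y hy hxy => ?_, f 1, hcoe one_pos, fun ε hε => ?_⟩
  · rw [hcoe hx, hcoe hy]
    exact EReal.coe_lt_coe_iff.2 (hanti hx hy hxy)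
  have hgap : f (1 + ε) < f 1 :=
    hanti (mem_Ioi.2 one_pos) (mem_Ioi.2 (by linarith)) (by linarith)
  have hbound {α : ℝ} (hα : 1 + ε ≤ α) : ∀ᶠ n : ℕ in atTop, rpowMoment P (ξ n) α ≤
      ENNReal.ofReal (1 * Real.exp (n * (f 1 - (f 1 - f (1 + ε)) / 2))) := by
    have hle : f α ≤ f (1 + ε) :=
      hanti.antitoneOn (mem_Ioi.2 (by linarith)) (mem_Ioi.2 (by linarith)) hα
    simp only [one_mul]
    refine eventually_le_ofReal_exp_of_limsup_lt ?_
    show limitingCumulant P ξ α < _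
    rw [hcoe (by linarith : (0 : ℝ) < α)]
    exact EReal.coe_lt_coe_iff.2 (by linarith)
  refine ⟨(f 1 - f (1 + ε)) / 2, by linarith, fun α hα => ⟨1, hbound hα⟩, 1, ?_⟩
  filter_upwards [hbound le_rfl] with n hn
  exact (measure_one_lt_le_rpowMoment (hξ n) (by linarith)).trans hn
end

section
/- Let A, A₁, A₂, … be i.i.d. positive random variables and ρ an independent ℕ∪{0}-valued random variable with P(ρ = n) ∝ p_{n+1} where Σ p_n < ∞ and n^{−1} log p_n → −υ < 0. Let i, Z be independent positive random variables (independent of everything), and suppose that the estimate P(A₁⋯A_ρ > v(1+v^{−δ'})) = (1+o(1)) P(A₁⋯A_ρ > v) holds as v → ∞ for some δ' > 0, and that for some ε > 0, P(A₁⋯A_ρ (1+i)Z > u) = (1+o(1)) ∫_{u^{−ε}}^{u^{1−ε}} P(A₁⋯A_ρ > u/x) dH(x), where H is the distribution function of (1+i)Z. Then for any δ > (1+ε)δ', P(A₁⋯A_ρ (1+i)Z > u(1+u^{−δ})) ≥ (1+o(1)) P(A₁⋯A_ρ (1+i)Z > u) as u → ∞. -/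
/-!
Write `W = A₁⋯A_ρ` and condition on `X = (1+i)Z`: by independence, `P(WX > u, X ∈ [u^{-ε}, u^{1-ε}])` is the integral of
`P(W > u/x)` against the law of `X`. On that range `v = u/x` lies in `[u^ε, u^{1+ε}]`, so `v → ∞`
uniformly and `u^{-δ} ≤ v^{-δ'}` once `δ ≥ (1+ε)δ'`; hence shifting `u` to `u(1+u^{-δ})` shifts each
`v` by less than the factor `1+v^{-δ'}`, which costs only a factor `1+o(1)` in `P(W > v)`.
Integrating and using the representation of `P(WX > u)` by the same integral gives the claim.
-/

open MeasureTheory Filter ProbabilityTheory Set Topology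

lemma Real.rpow_neg_le_rpow_neg_of_le_rpow {u v κ δ δ' : ℝ} (hu : 1 ≤ u) (hv : 0 < v)
    (hvu : v ≤ u ^ κ) (hδ' : 0 ≤ δ') (hδ : κ * δ' ≤ δ) : u ^ (-δ) ≤ v ^ (-δ') := by
  have hu0 : 0 < u := zero_lt_one.trans_le hu
  rw [Real.rpow_neg hu0.le, Real.rpow_neg hv.le]
  refine inv_anti₀ (Real.rpow_pos_of_pos hv _) ?_
  calc v ^ δ' ≤ (u ^ κ) ^ δ' := Real.rpow_le_rpow hv.le hvu hδ'
    _ = u ^ (κ * δ') := (Real.rpow_mul hu0.le _ _).symm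
    _ ≤ u ^ δ := Real.rpow_le_rpow_of_exponent_le hu hδ

lemma Real.div_mem_Icc_rpow {u ε x : ℝ} (hu : 0 < u) (hx : x ∈ Icc (u ^ (-ε)) (u ^ (1 - ε))) :
    u / x ∈ Icc (u ^ ε) (u ^ (1 + ε)) := by
  have hx0 : 0 < x := (Real.rpow_pos_of_pos hu _).trans_le hx.1
  have hdiv (t : ℝ) : u / u ^ t = u ^ (1 - t) := by rw [Real.rpow_sub hu, Real.rpow_one]
  constructor
  · calc u ^ ε = u / u ^ (1 - ε) := by rw [hdiv, sub_sub_cancel]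
      _ ≤ u / x := div_le_div_of_nonneg_left hu.le hx0 hx.2
  · calc u / x ≤ u / u ^ (-ε) := div_le_div_of_nonneg_left hu.le (Real.rpow_pos_of_pos hu _) hx.1
      _ = u ^ (1 + ε) := by rw [hdiv, sub_neg_eq_add]

lemma eventually_mul_le_of_tendsto_div {α : Type*} {l : Filter α} {f g : α → ℝ}
    (hf : ∀ a, 0 ≤ f a) (hg : ∀ a, 0 ≤ g a) (hfg : Tendsto (fun a => f a / g a) l (𝓝 1))
    {c : ℝ} (hc : c < 1) : ∀ᶠ a in l, c * g a ≤ f a := by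
  filter_upwards [hfg.eventually (eventually_gt_nhds hc)] with a ha
  rcases (hg a).eq_or_lt with h0 | h0
  · rw [← h0, mul_zero]
    exact hf a
  · exact ((lt_div_iff₀ h0).mp ha).le

lemma one_le_liminf_div_of_tendsto_div {α : Type*} {l : Filter α} [l.NeBot] {F F' G : α → ℝ}
    (hF : ∀ a, 0 ≤ F a) (hF' : ∀ a, 0 ≤ F' a) (hF'F : ∀ᶠ a in l, F' a ≤ F a)
    (hFG : Tendsto (fun a => F a / G a) l (𝓝 1)) (hGF' : ∀ c < 1, ∀ᶠ a in l, c * G a ≤ F' a) :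
    1 ≤ liminf (fun a => F' a / F a) l := by
  have hbdd : IsCoboundedUnder (· ≥ ·) l (fun a => F' a / F a) :=
    isCoboundedUnder_ge_of_eventually_le l (x := 1)
      (hF'F.mono fun a h => div_le_one_of_le₀ h (hF a))
  refine le_of_forall_lt_imp_le_of_dense fun c hc => le_liminf_of_le hbdd ?_
  rcases le_or_gt c 0 with hc0 | hc0
  · exact Eventually.of_forall fun a => hc0.trans (div_nonneg (hF' a) (hF a))
  -- `c = (c d) / d` with `c d < 1 < d`: bound `F'` below by `c d · G` and `F` above by `d · G`.
  obtain ⟨d, hd1, hdc⟩ := exists_between ((one_lt_inv₀ hc0).mpr hc)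
  have hcd : c * d < 1 := by
    simpa [hc0.ne'] using mul_lt_mul_of_pos_left hdc hc0
  filter_upwards [hGF' _ hcd, hFG.eventually (Ioo_mem_nhds zero_lt_one hd1)] with a hF'a hFa
  obtain ⟨hFpos, hGpos⟩ := (div_pos_iff.mp hFa.1).resolve_right fun h => (hF a).not_gt h.1
  rw [le_div_iff₀ hFpos]
  calc c * F a ≤ c * (d * G a) := by gcongr; exact ((div_lt_iff₀ hGpos).mp hFa.2).le
    _ = c * d * G a := (mul_assoc _ _ _).symm
    _ ≤ F' a := hF'a

lemma measurable_prod_range {M : Type*} [CommMonoid M] [MeasurableSpace M] [MeasurableMul₂ M] :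
    Measurable fun q : ℕ × (ℕ → M) => ∏ j ∈ Finset.range q.1, q.2 j :=
  measurable_from_prod_countable_right fun n =>
    Finset.measurable_prod (Finset.range n) fun j _ => measurable_pi_apply j

section Conditioning

variable {Ω : Type*} [MeasurableSpace Ω] (P : Measure Ω)

lemma antitone_measure_lt (W : Ω → ℝ) : Antitone fun v : ℝ => P {ω | v < W ω} :=
  fun _ _ h => measure_mono fun _ hω => h.trans_lt hω

lemma measurable_measure_div_lt (W : Ω → ℝ) (u : ℝ) :
    Measurable fun x : ℝ => P {ω | u / x < W ω} :=
  (antitone_measure_lt P W).measurable.comp (measurable_const.div measurable_id)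

variable [IsFiniteMeasure P]

lemma antitone_measure_lt_toReal (W : Ω → ℝ) : Antitone fun v : ℝ => (P {ω | v < W ω}).toReal :=
  fun _ _ h => ENNReal.toReal_mono (measure_ne_top _ _) (antitone_measure_lt P W h)

lemma integrable_measure_div_lt_toReal (W : Ω → ℝ) (ν : Measure ℝ) [IsFiniteMeasure ν] (u : ℝ) :
    Integrable (fun x => (P {ω | u / x < W ω}).toReal) ν :=
  Integrable.of_mem_Icc 0 (P univ).toReal
    (measurable_measure_div_lt P W u).ennreal_toReal.aemeasurable
    (ae_of_all _ fun _ =>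
      ⟨ENNReal.toReal_nonneg, ENNReal.toReal_mono (measure_ne_top _ _) (measure_mono (subset_univ _))⟩)

variable {W X : Ω → ℝ} (hW : Measurable W) (hX : Measurable X) (hXW : IndepFun X W P)
include hW hX hXW

theorem measure_lt_mul_and_mem_eq_setLIntegral {s : Set ℝ} (hs : MeasurableSet s)
    (hs0 : s ⊆ Ioi 0) (u : ℝ) :
    P {ω | u < W ω * X ω ∧ X ω ∈ s} = ∫⁻ x in s, P {ω | u / x < W ω} ∂(P.map X) := by
  set S : Set (ℝ × ℝ) := {q | u < q.2 * q.1 ∧ q.1 ∈ s}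
  have hS : MeasurableSet S :=
    (measurableSet_lt measurable_const (measurable_snd.mul measurable_fst)).inter (measurable_fst hs)
  have hslice (x : ℝ) : P.map W (Prod.mk x ⁻¹' S) = s.indicator (fun x => P {ω | u / x < W ω}) x := by
    by_cases hx : x ∈ s
    · have hx0 : 0 < x := hs0 hx
      have : Prod.mk x ⁻¹' S = Ioi (u / x) := by
        ext w
        simp [S, hx, div_lt_iff₀ hx0]
      rw [indicator_of_mem hx, this, Measure.map_apply hW measurableSet_Ioi]
      rfl
    · have : Prod.mk x ⁻¹' S = ∅ := by
        ext w
        simp [S, hx]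
      rw [indicator_of_notMem hx, this, measure_empty]
  calc P {ω | u < W ω * X ω ∧ X ω ∈ s} = P.map (fun ω => (X ω, W ω)) S := by
        rw [Measure.map_apply (hX.prodMk hW) hS]
        rfl
    _ = ((P.map X).prod (P.map W)) S := by
        rw [hXW.map_prod_eq_prod_map_map hX.aemeasurable hW.aemeasurable]
    _ = ∫⁻ x, s.indicator (fun x => P {ω | u / x < W ω}) x ∂(P.map X) := by
        rw [Measure.prod_apply hS]
        exact lintegral_congr hslice
    _ = ∫⁻ x in s, P {ω | u / x < W ω} ∂(P.map X) := lintegral_indicator hs _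

theorem measure_lt_mul_and_mem_toReal_eq_setIntegral {s : Set ℝ} (hs : MeasurableSet s)
    (hs0 : s ⊆ Ioi 0) (u : ℝ) :
    (P {ω | u < W ω * X ω ∧ X ω ∈ s}).toReal =
      ∫ x in s, (P {ω | u / x < W ω}).toReal ∂(P.map X) := by
  rw [measure_lt_mul_and_mem_eq_setLIntegral P hW hX hXW hs hs0]
  exact (integral_toReal (measurable_measure_div_lt P W u).aemeasurable
    (ae_of_all _ fun _ => measure_lt_top _ _)).symm

lemma eventually_mul_setIntegral_le_measure_lt_mul {δ δ' ε c : ℝ} (hδ' : 0 ≤ δ') (hε : 0 < ε)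
    (hδ : (1 + ε) * δ' ≤ δ)
    (hWc : ∀ᶠ v in atTop,
      c * (P {ω | v < W ω}).toReal ≤ (P {ω | v * (1 + v ^ (-δ')) < W ω}).toReal) :
    ∀ᶠ u in atTop,
      c * ∫ x in Icc (u ^ (-ε)) (u ^ (1 - ε)), (P {ω | u / x < W ω}).toReal ∂(P.map X) ≤
        (P {ω | u * (1 + u ^ (-δ)) < W ω * X ω}).toReal := by
  obtain ⟨V, hV⟩ := eventually_atTop.mp hWc
  filter_upwards [(tendsto_rpow_atTop hε).eventually_ge_atTop V, eventually_ge_atTop 1]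
    with u huV hu1
  have hu0 : 0 < u := zero_lt_one.trans_le hu1
  set I := Icc (u ^ (-ε)) (u ^ (1 - ε))
  set u' := u * (1 + u ^ (-δ))
  have hI0 : I ⊆ Ioi 0 := fun x hx => (Real.rpow_pos_of_pos hu0 _).trans_le hx.1
  have hpoint : ∀ x ∈ I, c * (P {ω | u / x < W ω}).toReal ≤ (P {ω | u' / x < W ω}).toReal := by
    intro x hx
    obtain ⟨hlow, hupp⟩ := Real.div_mem_Icc_rpow hu0 hx
    refine (hV _ (huV.trans hlow)).trans (antitone_measure_lt_toReal P W ?_)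
    calc u' / x = u / x * (1 + u ^ (-δ)) := mul_div_right_comm _ _ _
      _ ≤ u / x * (1 + (u / x) ^ (-δ')) := by
        have hv : 0 < u / x := div_pos hu0 (hI0 hx)
        gcongr
        exact Real.rpow_neg_le_rpow_neg_of_le_rpow hu1 hv hupp hδ' hδ
  calc c * ∫ x in I, (P {ω | u / x < W ω}).toReal ∂(P.map X)
      = ∫ x in I, c * (P {ω | u / x < W ω}).toReal ∂(P.map X) := (integral_const_mul _ _).symm
    _ ≤ ∫ x in I, (P {ω | u' / x < W ω}).toReal ∂(P.map X) :=
        setIntegral_mono_on ((integrable_measure_div_lt_toReal P W _ u).const_mul c)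
          (integrable_measure_div_lt_toReal P W _ u') measurableSet_Icc hpoint
    _ = (P {ω | u' < W ω * X ω ∧ X ω ∈ I}).toReal :=
        (measure_lt_mul_and_mem_toReal_eq_setIntegral P hW hX hXW measurableSet_Icc hI0 u').symm
    _ ≤ (P {ω | u' < W ω * X ω}).toReal :=
        ENNReal.toReal_mono (measure_ne_top _ _) (measure_mono fun _ h => h.1)

theorem one_le_liminf_measure_lt_mul_ratio {δ δ' ε : ℝ} (hδ' : 0 ≤ δ') (hε : 0 < ε)
    (hδ : (1 + ε) * δ' ≤ δ)
    (hWtail : Tendsto (fun v : ℝ =>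
      (P {ω | v * (1 + v ^ (-δ')) < W ω}).toReal / (P {ω | v < W ω}).toReal) atTop (𝓝 1))
    (hrep : Tendsto (fun u : ℝ => (P {ω | u < W ω * X ω}).toReal /
      ∫ x in Icc (u ^ (-ε)) (u ^ (1 - ε)), (P {ω | u / x < W ω}).toReal ∂(P.map X)) atTop (𝓝 1)) :
    1 ≤ liminf (fun u : ℝ => (P {ω | u * (1 + u ^ (-δ)) < W ω * X ω}).toReal /
      (P {ω | u < W ω * X ω}).toReal) atTop := by
  refine one_le_liminf_div_of_tendsto_div (fun _ => ENNReal.toReal_nonneg)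
    (fun _ => ENNReal.toReal_nonneg) ?_ hrep fun c hc => ?_
  · filter_upwards [eventually_ge_atTop 0] with u hu
    refine antitone_measure_lt_toReal P (W * X) ?_
    nlinarith [Real.rpow_nonneg hu (-δ)]
  · exact eventually_mul_setIntegral_le_measure_lt_mul P hW hX hXW hδ' hε hδ
      (eventually_mul_le_of_tendsto_div (fun _ => ENNReal.toReal_nonneg)
        (fun _ => ENNReal.toReal_nonneg) hWtail hc)

end Conditioning

theorem tail_insensitivity_transfer_general
    {Ω : Type*} [MeasurableSpace Ω] (P : Measure Ω) [IsProbabilityMeasure P]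
    (A : ℕ → Ω → ℝ) (hAmeas : ∀ j, Measurable (A j))
    (ρ : Ω → ℕ) (hρmeas : Measurable ρ)
    (i Z : Ω → ℝ) (himeas : Measurable i) (hZmeas : Measurable Z)
    (hiZrest : IndepFun (fun ω => (i ω, Z ω))
      (fun ω => (ρ ω, fun j => A j ω)) P)
    (δ' : ℝ) (hδ' : 0 < δ')
    (hProdTail : Tendsto (fun v : ℝ =>
        (P {ω | (∏ j ∈ Finset.range (ρ ω), A j ω) > v * (1 + v ^ (-δ'))}).toReal /
          (P {ω | (∏ j ∈ Finset.range (ρ ω), A j ω) > v}).toReal)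
      atTop (nhds 1))
    (ε : ℝ) (hε : 0 < ε)
    (hrep : Tendsto (fun u : ℝ =>
        (P {ω | (∏ j ∈ Finset.range (ρ ω), A j ω) * ((1 + i ω) * Z ω) > u}).toReal /
          ∫ x in Set.Icc (u ^ (-ε)) (u ^ (1 - ε)),
            (P {ω | (∏ j ∈ Finset.range (ρ ω), A j ω) > u / x}).toReal
            ∂(Measure.map (fun ω => (1 + i ω) * Z ω) P))
      atTop (nhds 1)) :
    ∀ δ : ℝ, (1 + ε) * δ' < δ →
      1 ≤ liminf (fun u : ℝ =>
        (P {ω | (∏ j ∈ Finset.range (ρ ω), A j ω) * ((1 + i ω) * Z ω) >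
            u * (1 + u ^ (-δ))}).toReal /
          (P {ω | (∏ j ∈ Finset.range (ρ ω), A j ω) * ((1 + i ω) * Z ω) > u}).toReal)
        atTop := by
  intro δ hδ
  have hφ : Measurable fun q : ℝ × ℝ => (1 + q.1) * q.2 :=
    (measurable_const.add measurable_fst).mul measurable_snd
  have hW : Measurable fun ω => ∏ j ∈ Finset.range (ρ ω), A j ω :=
    measurable_prod_range.comp (hρmeas.prodMk (measurable_pi_lambda _ hAmeas))
  exact one_le_liminf_measure_lt_mul_ratio P hW (hφ.comp (himeas.prodMk hZmeas))
    (hiZrest.comp hφ measurable_prod_range) hδ'.le hε hδ.le hProdTail hrep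

/-- Step 2 of the proof of Theorem 3.5, estimates (6.15)–(6.19): the tail
insensitivity property transfers from the product `A₁⋯A_ρ` to
`A₁⋯A_ρ (1+i) Z`. -/
theorem tail_insensitivity_transfer
    {Ω : Type*} [MeasurableSpace Ω] (P : Measure Ω) [IsProbabilityMeasure P]
    (A : ℕ → Ω → ℝ) (hAmeas : ∀ j, Measurable (A j))
    (hAindep : iIndepFun A P)
    (hAident : ∀ j, Measure.map (A j) P = Measure.map (A 0) P)
    (hApos : ∀ j, ∀ᵐ ω ∂P, 0 < A j ω)
    (p : ℕ → ℝ) (hpnonneg : ∀ n, 0 ≤ p n) (hpsum : Summable p)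
    (υ : ℝ) (hυ : 0 < υ)
    (hptail : Tendsto (fun n : ℕ => Real.log (p n) / n) atTop (nhds (-υ)))
    (ρ : Ω → ℕ) (hρmeas : Measurable ρ)
    (hρdist : ∀ n : ℕ, P {ω | ρ ω = n} = ENNReal.ofReal (p (n + 1) / ∑' m, p m))
    (i Z : Ω → ℝ) (himeas : Measurable i) (hZmeas : Measurable Z)
    (hipos : ∀ᵐ ω ∂P, 0 < i ω) (hZpos : ∀ᵐ ω ∂P, 0 < Z ω)
    (hiZindep : IndepFun i Z P)
    (hρAindep : IndepFun ρ (fun ω => fun j => A j ω) P)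
    (hiZrest : IndepFun (fun ω => (i ω, Z ω))
      (fun ω => (ρ ω, fun j => A j ω)) P)
    (δ' : ℝ) (hδ' : 0 < δ')
    (hProdTail : Tendsto (fun v : ℝ =>
        (P {ω | (∏ j ∈ Finset.range (ρ ω), A j ω) > v * (1 + v ^ (-δ'))}).toReal /
          (P {ω | (∏ j ∈ Finset.range (ρ ω), A j ω) > v}).toReal)
      atTop (nhds 1))
    (ε : ℝ) (hε : 0 < ε)
    (hrep : Tendsto (fun u : ℝ =>
        (P {ω | (∏ j ∈ Finset.range (ρ ω), A j ω) * ((1 + i ω) * Z ω) > u}).toReal /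
          ∫ x in Set.Icc (u ^ (-ε)) (u ^ (1 - ε)),
            (P {ω | (∏ j ∈ Finset.range (ρ ω), A j ω) > u / x}).toReal
            ∂(Measure.map (fun ω => (1 + i ω) * Z ω) P))
      atTop (nhds 1)) :
    ∀ δ : ℝ, (1 + ε) * δ' < δ →
      1 ≤ liminf (fun u : ℝ =>
        (P {ω | (∏ j ∈ Finset.range (ρ ω), A j ω) * ((1 + i ω) * Z ω) >
            u * (1 + u ^ (-δ))}).toReal /
          (P {ω | (∏ j ∈ Finset.range (ρ ω), A j ω) * ((1 + i ω) * Z ω) > u}).toReal)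
        atTop :=
  tail_insensitivity_transfer_general P A hAmeas ρ hρmeas i Z himeas hZmeas hiZrest δ' hδ' hProdTail
    ε hε hrep
end
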